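/- Let d be an odd positive integer, λ, α complex numbers, and f : ℤ/dℤ → ℂ a function whose Fourier transform satisfies f̂ = α·f. Let F = f² (pointwise square). Then the following are equivalent: (i) (f ∗ f)(2k) = λ f(k)² for all k ∈ ℤ/dℤ; (ii) F̂(2k) = (α²λ/√d) F(k) for all k ∈ ℤ/dℤ. -/

import Mathlib

/-!
With the unitary normalisation, the Fourier transform on `ℤ/dℤ` turns pointwise products into
convolutions up to a factor `√d`: `f̂ ∗ ĝ = √d · (fg)^`. For `f̂ = αf` and `F = f²` this reads
`√d · F̂ = α² · (f ∗ f)`, so condition (ii) at `2k` is condition (i) at `k` multiplied by `α²`.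
When `α = 0`, injectivity of the transform forces `f = 0` and both conditions hold trivially.
-/

open Finset

/-- Convolution of two functions on `ℤ/dℤ`. -/
noncomputable def conv {d : ℕ} [NeZero d] (f g : ZMod d → ℂ) (k : ZMod d) : ℂ :=
  ∑ l : ZMod d, f l * g (k - l)

/-- Fourier transform of a function on `ℤ/dℤ`. -/
noncomputable def dft {d : ℕ} [NeZero d] (f : ZMod d → ℂ) (k : ZMod d) : ℂ :=
  (1 / (Real.sqrt d : ℂ)) * ∑ l : ZMod d,
    Complex.exp (-2 * (Real.pi : ℂ) * Complex.I * (k.val : ℂ) * (l.val : ℂ) / d) * f l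

open scoped ZMod

section

variable {d : ℕ} [NeZero d]

lemma conv_smul_smul (a b : ℂ) (f g : ZMod d → ℂ) :
    conv (a • f) (b • g) = (a * b) • conv f g := by
  ext k
  simp only [conv, Pi.smul_apply, smul_eq_mul, mul_sum]
  exact sum_congr rfl fun l _ => by ring

namespace ZMod

theorem dft_conv (f g : ZMod d → ℂ) : 𝓕 (conv f g) = 𝓕 f * 𝓕 g := by
  ext k
  simp only [dft_apply, conv, Pi.mul_apply, smul_eq_mul]
  rw [sum_mul_sum]
  simp only [mul_sum]
  rw [sum_comm]
  refine sum_congr rfl fun l _ => (Fintype.sum_equiv (Equiv.addRight l) _ _ fun m => ?_).symm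
  rw [Equiv.coe_addRight, add_sub_cancel_right, add_mul, neg_add, AddChar.map_add_eq_mul]
  ring

theorem conv_dft_dft (f g : ZMod d → ℂ) : conv (𝓕 f) (𝓕 g) = (d : ℂ) • 𝓕 (f * g) := by
  apply (𝓕 : (ZMod d → ℂ) ≃ₗ[ℂ] (ZMod d → ℂ)).injective
  rw [dft_conv, _root_.map_smul, dft_dft, dft_dft, dft_dft]
  ext k
  simp only [Pi.mul_apply, Pi.smul_apply, smul_eq_mul]
  ring

end ZMod

lemma sqrt_natCast_ne_zero : (Real.sqrt d : ℂ) ≠ 0 := by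
  exact_mod_cast (Real.sqrt_pos.mpr (Nat.cast_pos.mpr (Nat.pos_of_neZero d))).ne'

lemma dft_eq_inv_sqrt_smul_zmodDFT (f : ZMod d → ℂ) : dft f = (Real.sqrt d : ℂ)⁻¹ • 𝓕 f := by
  ext k
  rw [dft, one_div, Pi.smul_apply, smul_eq_mul, ZMod.dft_apply]
  congr 1
  refine sum_congr rfl fun l _ => ?_
  have hcast : -(l * k) = ((-(l.val * k.val : ℕ) : ℤ) : ZMod d) := by push_cast; simp
  rw [hcast, ZMod.stdAddChar_coe, smul_eq_mul]
  congr 2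
  push_cast
  ring

lemma dft_eq_zero_iff {f : ZMod d → ℂ} : dft f = 0 ↔ f = 0 := by
  rw [dft_eq_inv_sqrt_smul_zmodDFT, smul_eq_zero_iff_right (inv_ne_zero sqrt_natCast_ne_zero),
    LinearEquiv.map_eq_zero_iff]

theorem conv_dft_dft (f g : ZMod d → ℂ) :
    conv (dft f) (dft g) = (Real.sqrt d : ℂ) • dft (f * g) := by
  have hsq : (Real.sqrt d : ℂ) ^ 2 = d := by
    exact_mod_cast Real.sq_sqrt (Nat.cast_nonneg d)
  simp only [dft_eq_inv_sqrt_smul_zmodDFT, conv_smul_smul, ZMod.conv_dft_dft, smul_smul]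
  congr 1
  rw [← hsq]
  field_simp

end

theorem convolution_eq_iff_square_fourier_general (d : ℕ) [NeZero d]
    (lam α : ℂ) (f : ZMod d → ℂ) (hf : ∀ k : ZMod d, dft f k = α * f k)
    (F : ZMod d → ℂ) (hF : ∀ k : ZMod d, F k = f k ^ 2) :
    (∀ k : ZMod d, conv f f (2 * k) = lam * f k ^ 2) ↔
      (∀ k : ZMod d, dft F (2 * k) = α ^ 2 * lam / (Real.sqrt d : ℂ) * F k) := by
  have hF' : F = f * f := funext fun k => by rw [hF, sq, Pi.mul_apply]
  have hdft : dft f = α • f := funext hf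
  have hdftF : (Real.sqrt d : ℂ) • dft F = α ^ 2 • conv f f := by
    rw [hF', ← conv_dft_dft, hdft, conv_smul_smul, sq]
  rcases eq_or_ne α 0 with rfl | hα
  · obtain rfl : f = 0 := dft_eq_zero_iff.mp (by rw [hdft, zero_smul])
    obtain rfl : F = 0 := by simpa using hF'
    simp [conv, dft_eq_zero_iff.mpr rfl]
  refine forall_congr' fun k => ?_
  have hk : (Real.sqrt d : ℂ) * dft F (2 * k) = α ^ 2 * conv f f (2 * k) := congrFun hdftF (2 * k)
  rw [← mul_right_inj' (pow_ne_zero 2 hα), ← hk, hF, div_mul_eq_mul_div,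
    eq_div_iff sqrt_natCast_ne_zero, mul_comm (dft F _), mul_assoc]

/-- Lemma 3.1: if `f̂ = αf` and `F = f²` then
`f∗f(2t) = λf(t)² ⟺ F̂(2t) = (α²λ/√d) F(t)`. -/
theorem convolution_eq_iff_square_fourier (d : ℕ) [NeZero d] (hd : Odd d)
    (lam α : ℂ) (f : ZMod d → ℂ) (hf : ∀ k : ZMod d, dft f k = α * f k)
    (F : ZMod d → ℂ) (hF : ∀ k : ZMod d, F k = f k ^ 2) :
    (∀ k : ZMod d, conv f f (2 * k) = lam * f k ^ 2) ↔
      (∀ k : ZMod d, dft F (2 * k) = α ^ 2 * lam / (Real.sqrt d : ℂ) * F k) :=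
  convolution_eq_iff_square_fourier_general d lam α f hf F hF
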